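/- arXiv:2307.10535 — 2 statements merged into one kernel-verified Lean document; each statement's English description precedes it below -/
import Mathlib

section
/- Let (G,·,▷,Φ) be a twisted post group with sub-adjacent operation ∘, and for a,b∈G, e_{a∘b} = e_b, where e_x = (L_x^▷)^{-1}(Φ(x)^{-1}·x). -/
/-- A (left) twisted post group: a group `G` with a binary operation `tri` (written `▷`)
and a cocycle `phi` such that each left multiplication `tri a` is a group automorphism,
`(a ∘ b) ▷ c = a ▷ (b ▷ c)` and `Φ(a ∘ b) = a ∘ Φ(b)`, where `a ∘ b = Φ(a)·(a ▷ b)`. -/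
structure TPG (G : Type*) [Group G] where
  tri : G → G → G
  phi : G → G
  tri_mul : ∀ a b c : G, tri a (b * c) = tri a b * tri a c
  tri_bij : ∀ a : G, Function.Bijective (tri a)
  tri_assoc : ∀ a b c : G, tri (phi a * tri a b) c = tri a (tri b c)
  phi_comp : ∀ a b : G, phi (phi a * tri a b) = phi a * tri a (phi b)

namespace TPG

variable {G : Type*} [Group G] (T : TPG G)

/-- The sub-adjacent operation `a ∘ b = Φ(a)·(a ▷ b)`. -/
def circ (a b : G) : G := T.phi a * T.tri a b

/-- `e_a = (L_a^▷)⁻¹(Φ(a)⁻¹·a)`. -/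
noncomputable def e (a : G) : G := Function.invFun (T.tri a) ((T.phi a)⁻¹ * a)

/-- `a† = (L_a^▷)⁻¹(Φ(a)⁻¹·e_a)`. -/
noncomputable def dag (a : G) : G := Function.invFun (T.tri a) ((T.phi a)⁻¹ * T.e a)

end TPG

namespace TPG

variable {G : Type*} [Group G] (T : TPG G)

lemma tri_inv (a b : G) : T.tri a b⁻¹ = (T.tri a b)⁻¹ :=
  (MonoidHom.mk' (T.tri a) (T.tri_mul a)).map_inv b

lemma tri_e (a : G) : T.tri a (T.e a) = (T.phi a)⁻¹ * a :=
  Function.invFun_eq ((T.tri_bij a).surjective _)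

lemma tri_circ (a b c : G) : T.tri (T.circ a b) c = T.tri a (T.tri b c) :=
  T.tri_assoc a b c

lemma phi_circ (a b : G) : T.phi (T.circ a b) = T.circ a (T.phi b) :=
  T.phi_comp a b

end TPG

/-- `e_{a ∘ b} = e_b`. -/
theorem e_circ {G : Type*} [Group G] (T : TPG G) (a b : G) :
    T.e (T.circ a b) = T.e b := by
  apply (T.tri_bij (T.circ a b)).injective
  calc T.tri (T.circ a b) (T.e (T.circ a b))
      = (T.phi a * T.tri a (T.phi b))⁻¹ * (T.phi a * T.tri a b) := by
        rw [T.tri_e, T.phi_circ, TPG.circ, TPG.circ]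
    _ = T.tri a ((T.phi b)⁻¹ * b) := by
        rw [T.tri_mul, T.tri_inv, mul_inv_rev, mul_assoc, inv_mul_cancel_left]
    _ = T.tri (T.circ a b) (T.e b) := by
        rw [T.tri_circ, T.tri_e]
end

section
/- Let (G,·,▷,◁,Φ) be a two-sided twisted post group with sub-adjacent operation ∘. Then (G,∘) is a group (with identity e_1), Φ is surjective onto G, and defining a•b = (a∘1†)∘b makes (G,·,•) a two-sided skew brace: (G,·) and (G,•) are groups satisfying both a•(b·c) = (a•b)·a^{-1}·(a•c) and (a·b)•c = (a•c)·c^{-1}·(b•c). -/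
/-- A two-sided twisted post group: `(G,·,▷,Φ)` is a left twisted post group,
`(G,·,◁,Φ)` is a right twisted post group, and the two sub-adjacent operations
coincide. -/
structure TwoSidedTPG (G : Type*) [Group G] extends TPG G where
  tril : G → G → G
  tril_mul : ∀ a b c : G, tril (a * b) c = tril a c * tril b c
  tril_bij : ∀ b : G, Function.Bijective (fun a : G => tril a b)
  tril_assoc : ∀ a b c : G, tril a (phi b * tri b c) = tril (tril a b) c
  phi_comp' : ∀ a b : G, phi (phi a * tri a b) = tril (phi a) b * phi b
  circ_eq : ∀ a b : G, phi a * tri a b = tril a b * phi b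

/-!
Associativity of `a ∘ b = Φ(a)·(a ▷ b) = (a ◁ b)·Φ(b)` together with bijectivity of `a ▷ -` and
`- ◁ b` makes `(G, ∘)` an associative quasigroup, hence a group; its identity is `e_1` because
`1 ∘ e_1 = 1`. Since `Φ(x) = x ∘ 1` and `1†` is the `∘`-inverse of `1`, the map `θ(a) = a ∘ 1†`
is inverse to `Φ`. The two skew brace laws are then the identities
`x ∘ (b·c) = (x ∘ b)·Φ(x)⁻¹·(x ∘ c)` and `(x·y) ∘ z = (x ∘ z)·Φ(z)⁻¹·(y ∘ z)`, read off from the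
two factorisations of `∘`, applied with `Φ(θ a) = a` and `Φ(1† ∘ c) = c`.
-/

open Function

section AssociativeQuasigroup

variable {α : Type*} {op : α → α → α}

theorem op_identity_of_op_eq_self (assoc : ∀ a b c, op (op a b) c = op a (op b c))
    (surj_left : ∀ a, Surjective (op a)) (surj_right : ∀ b, Surjective (fun a => op a b))
    {u v : α} (h : op u v = u) : (∀ x, op x v = x) ∧ (∀ x, op v x = x) := by
  have right_id : ∀ x, op x v = x := by
    intro x
    obtain ⟨a, rfl⟩ := surj_right u x
    rw [assoc, h]
  obtain ⟨f, hf⟩ := surj_right u u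
  have f_left_id : ∀ x, op f x = x := by
    intro x
    obtain ⟨b, rfl⟩ := surj_left u x
    rw [← assoc, show op f u = u from hf]
  have hfv : f = v := by rw [← right_id f, f_left_id]
  exact ⟨right_id, hfv ▸ f_left_id⟩

theorem op_left_inv_eq_right_inv (assoc : ∀ a b c, op (op a b) c = op a (op b c)) {e x y z : α}
    (id_left : ∀ a, op e a = a) (id_right : ∀ a, op a e = a)
    (hz : op z x = e) (hy : op x y = e) : z = y := by
  rw [← id_right z, ← hy, ← assoc, hz, id_left]

end AssociativeQuasigroup

namespace TPG

variable {G : Type*} [Group G] (T : TPG G)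

theorem tri_one (a : G) : T.tri a 1 = 1 :=
  (MonoidHom.mk' (T.tri a) (T.tri_mul a)).map_one

theorem phi_eq_circ_one (x : G) : T.phi x = T.circ x 1 := by
  rw [circ, tri_one, mul_one]

theorem circ_assoc (a b c : G) : T.circ (T.circ a b) c = T.circ a (T.circ b c) := by
  simp only [circ]
  rw [T.phi_comp, T.tri_assoc, T.tri_mul, mul_assoc]

theorem circ_left_bijective (a : G) : Bijective (T.circ a) :=
  (Group.mulLeft_bijective (T.phi a)).comp (T.tri_bij a)

theorem circ_mul (x b c : G) :
    T.circ x (b * c) = T.circ x b * (T.phi x)⁻¹ * T.circ x c := by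
  simp only [circ, T.tri_mul]
  group

theorem circ_invFun_tri (a y : G) : T.circ a (invFun (T.tri a) ((T.phi a)⁻¹ * y)) = y := by
  rw [circ, rightInverse_invFun (T.tri_bij a).2, mul_inv_cancel_left]

theorem circ_e_self (a : G) : T.circ a (T.e a) = a :=
  T.circ_invFun_tri a a

theorem circ_dag_self (a : G) : T.circ a (T.dag a) = T.e a :=
  T.circ_invFun_tri a (T.e a)

end TPG

namespace TwoSidedTPG

variable {G : Type*} [Group G] (T : TwoSidedTPG G)

theorem circ_eq_tril_mul_phi (a b : G) : T.circ a b = T.tril a b * T.phi b :=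
  T.circ_eq a b

theorem circ_right_bijective (b : G) : Bijective (fun a => T.circ a b) := by
  simp only [circ_eq_tril_mul_phi]
  exact (Group.mulRight_bijective (T.phi b)).comp (T.tril_bij b)

theorem phi_circ (a b : G) : T.phi (T.circ a b) = T.circ (T.phi a) b :=
  (T.phi_comp' a b).trans (T.circ_eq (T.phi a) b).symm

theorem mul_circ (x y z : G) :
    T.circ (x * y) z = T.circ x z * (T.phi z)⁻¹ * T.circ y z := by
  simp only [circ_eq_tril_mul_phi, T.tril_mul]
  group

theorem circ_e_one_right_and_left : (∀ x, T.circ x (T.e 1) = x) ∧ (∀ x, T.circ (T.e 1) x = x) :=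
  op_identity_of_op_eq_self T.circ_assoc (fun a => (T.circ_left_bijective a).2)
    (fun b => (T.circ_right_bijective b).2) (T.circ_e_self 1)

theorem circ_e_one (x : G) : T.circ x (T.e 1) = x :=
  T.circ_e_one_right_and_left.1 x

theorem e_one_circ (x : G) : T.circ (T.e 1) x = x :=
  T.circ_e_one_right_and_left.2 x

theorem circ_left_inv_eq_right_inv {x y z : G} (hz : T.circ z x = T.e 1)
    (hy : T.circ x y = T.e 1) : z = y :=
  op_left_inv_eq_right_inv T.circ_assoc T.e_one_circ T.circ_e_one hz hy

theorem exists_circ_inv (x : G) : ∃ y, T.circ x y = T.e 1 ∧ T.circ y x = T.e 1 := by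
  obtain ⟨y, hy⟩ := (T.circ_left_bijective x).2 (T.e 1)
  obtain ⟨z, hz⟩ := (T.circ_right_bijective x).2 (T.e 1)
  exact ⟨y, hy, T.circ_left_inv_eq_right_inv hz hy ▸ hz⟩

theorem dag_one_circ_one : T.circ (T.dag 1) 1 = T.e 1 := by
  obtain ⟨z, hz⟩ := (T.circ_right_bijective 1).2 (T.e 1)
  exact T.circ_left_inv_eq_right_inv hz (T.circ_dag_self 1) ▸ hz

theorem phi_surjective : Surjective T.phi := by
  rw [show T.phi = fun a => T.circ a 1 from funext T.phi_eq_circ_one]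
  exact (T.circ_right_bijective 1).2

theorem circ_dag_one_circ_one (a : G) : T.circ (T.circ a (T.dag 1)) 1 = a := by
  rw [T.circ_assoc, T.dag_one_circ_one, T.circ_e_one]

theorem phi_circ_dag_one (a : G) : T.phi (T.circ a (T.dag 1)) = a := by
  rw [T.phi_eq_circ_one, T.circ_dag_one_circ_one]

theorem phi_dag_one_circ (c : G) : T.phi (T.circ (T.dag 1) c) = c := by
  rw [T.phi_circ, T.phi_eq_circ_one, T.dag_one_circ_one, T.e_one_circ]

end TwoSidedTPG

/-- For a two-sided twisted post group, `(G, ∘)` is a group with identity `e_1`,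
`Φ` is surjective, and `a • b = (a ∘ 1†) ∘ b` makes `(G, ·, •)` a two-sided
skew brace. -/
theorem twoSided_skewBrace {G : Type*} [Group G] (T : TwoSidedTPG G) :
    (∀ x : G, T.circ x (T.e 1) = x ∧ T.circ (T.e 1) x = x) ∧
    (∀ x : G, ∃ y : G, T.circ x y = T.e 1 ∧ T.circ y x = T.e 1) ∧
    Function.Surjective T.phi ∧
    (∀ a b c : G,
      T.circ (T.circ (T.circ (T.circ a (T.dag 1)) b) (T.dag 1)) c =
        T.circ (T.circ a (T.dag 1)) (T.circ (T.circ b (T.dag 1)) c)) ∧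
    (∀ a : G, T.circ (T.circ a (T.dag 1)) 1 = a ∧ T.circ (T.circ 1 (T.dag 1)) a = a) ∧
    (∀ a : G, ∃ b : G, T.circ (T.circ a (T.dag 1)) b = 1 ∧
      T.circ (T.circ b (T.dag 1)) a = 1) ∧
    (∀ a b c : G, T.circ (T.circ a (T.dag 1)) (b * c) =
      T.circ (T.circ a (T.dag 1)) b * a⁻¹ * T.circ (T.circ a (T.dag 1)) c) ∧
    (∀ a b c : G, T.circ (T.circ (a * b) (T.dag 1)) c =
      T.circ (T.circ a (T.dag 1)) c * c⁻¹ * T.circ (T.circ b (T.dag 1)) c) := by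
  refine ⟨fun x => ⟨T.circ_e_one x, T.e_one_circ x⟩, T.exists_circ_inv, T.phi_surjective,
    fun a b c => by simp only [T.circ_assoc], fun a => ⟨T.circ_dag_one_circ_one a, ?_⟩,
    fun a => ?_, fun a b c => ?_, fun a b c => ?_⟩
  · rw [T.circ_dag_self, T.e_one_circ]
  · obtain ⟨y, hy, hy'⟩ := T.exists_circ_inv a
    -- `(a ∘ 1†)⁻¹ = 1 ∘ y` in `(G, ∘)`, so the `•`-inverse of `a` is `1 ∘ y ∘ 1`
    refine ⟨T.circ 1 (T.circ y 1), ?_, ?_⟩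
    · rw [T.circ_assoc, ← T.circ_assoc (T.dag 1), T.dag_one_circ_one, T.e_one_circ,
        ← T.circ_assoc, hy, T.e_one_circ]
    · rw [T.circ_assoc 1, T.circ_assoc y, T.circ_dag_self, T.circ_e_one, T.circ_assoc, hy',
        T.circ_e_one]
  · rw [T.circ_mul, T.phi_circ_dag_one]
  · rw [T.circ_assoc, T.circ_assoc, T.circ_assoc, T.mul_circ, T.phi_dag_one_circ]
end
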